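/- Let u(x) = x²/2 on [0,1], and for n ∈ ℕ with h = 1/n let u_h(x) = u(x) + cos(πnx)/(nπ)². Then: u_h(x) ≥ 0 and u_h → u uniformly on [0,1]; u_h'(x) = u'(x) − sin(πnx)/(nπ) satisfies 0 ≤ u_h'(x) ≤ 1 and u_h' → u' uniformly on [0,1]; the centered second difference satisfies Δ²_h u_h(x) := (u_h(x+h) − 2u_h(x) + u_h(x−h))/h² = 1 − 4cos(πnx)/π², which is nonnegative for all x; yet for m > 0, n = 2^{j+m} and the dyadic point x = i/2^j one has Δ²_h u_h(x) = 1 − 4/π², while u''(x) = 1. Hence the second order differences of u_h at dyadic points converge to 1 − 4/π² ≠ 1 = u'', even though u_h and u_h' converge uniformly to u and u'. -/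

import Mathlib

open Set Filter Real

namespace Stmt19

/-- `u(x) = x²/2`. -/
noncomputable def u (x : ℝ) : ℝ := x ^ 2 / 2

/-- `u_h(x) = x²/2 + cos(πnx)/(nπ)²` for `h = 1/n`. -/
noncomputable def uh (n : ℕ) (x : ℝ) : ℝ :=
  x ^ 2 / 2 + Real.cos (π * n * x) / (n * π) ^ 2

/-- Centered second difference `secondDiff_h v (x) = (v(x+h) - 2v(x) + v(x-h))/h²`. -/
noncomputable def secondDiff (v : ℝ → ℝ) (h x : ℝ) : ℝ :=
  (v (x + h) - 2 * v x + v (x - h)) / h ^ 2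

end Stmt19

open Stmt19

/-!
The perturbation `cos(πnx)/(nπ)²` and its derivative `-sin(πnx)/(nπ)` are `O(1/n)` uniformly, but
the step `h = 1/n` shifts the phase `πnx` by exactly `π`, so `cos(θ ± π) = -cos θ` makes the
second difference of the perturbation equal to `-4 cos(πnx)/π²`, an `O(1)` term. At a dyadic
point `i/2^j` with `n = 2^(j+m)`, `m > 0`, the phase `πnx = 2π · i 2^(m-1)` is a multiple of
`2π`, so that term is `-4/π²`. The bounds `0 ≤ u_h' ≤ 1` on `[0,1]` hold because `u_h'` is
monotone (`u_h'' = 1 - cos(πnx) ≥ 0`) with `u_h'(0) = 0` and `u_h'(1) = 1`.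
-/

theorem tendstoUniformly_of_dist_le_of_tendsto_zero {ι α β : Type*} [PseudoMetricSpace β]
    {p : Filter ι} {F : ι → α → β} {f : α → β} {b : ι → ℝ} (hb : Tendsto b p (nhds 0))
    (h : ∀ᶠ n in p, ∀ x, dist (f x) (F n x) ≤ b n) : TendstoUniformly F f p :=
  Metric.tendstoUniformly_iff.2 fun _ε hε =>
    (h.and (hb.eventually (gt_mem_nhds hε))).mono fun _n hn x => (hn.1 x).trans_lt hn.2

namespace Stmt19

theorem hasDerivAt_u (x : ℝ) : HasDerivAt u x x := by
  unfold u
  simpa using (hasDerivAt_pow 2 x).div_const 2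

theorem deriv_u : deriv u = fun x => x :=
  funext fun x => (hasDerivAt_u x).deriv

theorem four_lt_pi_sq : 4 < π ^ 2 := by
  nlinarith [pi_gt_three]

theorem one_sub_four_mul_cos_div_pi_sq_nonneg (t : ℝ) : 0 ≤ 1 - 4 * cos t / π ^ 2 := by
  rw [sub_nonneg, div_le_one (by positivity)]
  nlinarith [cos_le_one t, four_lt_pi_sq]

variable {n : ℕ}

/-- `cos t ≥ 1 - t²/2` at `t = πnx` cancels the quadratic term, leaving `u_h x ≥ 1/(nπ)²`. -/
theorem uh_pos (hn : n ≠ 0) (x : ℝ) : 0 < uh n x := by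
  have hnπ : (0 : ℝ) < (n * π) ^ 2 := by positivity
  have hcos : (1 - (π * n * x) ^ 2 / 2) / (n * π) ^ 2 ≤ cos (π * n * x) / (n * π) ^ 2 := by
    gcongr
    exact one_sub_sq_div_two_le_cos
  have hsplit : (1 - (π * n * x) ^ 2 / 2) / (n * π) ^ 2 = 1 / (n * π) ^ 2 - x ^ 2 / 2 := by
    field_simp
  rw [uh]
  linarith [one_div_pos.2 hnπ]

theorem tendsto_inv_natCast_mul_pi : Tendsto (fun n : ℕ => 1 / (n * π)) atTop (nhds 0) := by
  simpa [one_div, mul_inv] using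
    (tendsto_inv_atTop_zero.comp tendsto_natCast_atTop_atTop).const_mul π⁻¹

theorem tendstoUniformly_uh : TendstoUniformly uh u atTop := by
  refine tendstoUniformly_of_dist_le_of_tendsto_zero tendsto_inv_natCast_mul_pi ?_
  filter_upwards [eventually_ge_atTop 1] with n hn x
  have hnπ : 1 ≤ (n : ℝ) * π := by
    nlinarith [pi_gt_three, (Nat.one_le_cast.2 hn : (1 : ℝ) ≤ n)]
  rw [Real.dist_eq, u, uh, show x ^ 2 / 2 - (x ^ 2 / 2 + cos (π * n * x) / (n * π) ^ 2)
      = -(cos (π * n * x) / (n * π) ^ 2) by ring, abs_neg, abs_div,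
    abs_of_pos (by positivity : (0 : ℝ) < (n * π) ^ 2)]
  calc |cos (π * n * x)| / (n * π) ^ 2 ≤ 1 / (n * π) ^ 2 := by gcongr; exact abs_cos_le_one _
    _ ≤ 1 / (n * π) := by gcongr; nlinarith

theorem hasDerivAt_uh (hn : n ≠ 0) (x : ℝ) :
    HasDerivAt (uh n) (x - sin (π * n * x) / (n * π)) x := by
  have hn' : (n : ℝ) ≠ 0 := Nat.cast_ne_zero.2 hn
  have hcos : HasDerivAt (fun x => cos (π * n * x)) (-sin (π * n * x) * (π * n)) x :=
    (hasDerivAt_cos _).comp x (by simpa using (hasDerivAt_id x).const_mul (π * n))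
  exact ((hasDerivAt_u x).add (hcos.div_const ((n * π) ^ 2))).congr_deriv (by field_simp; ring)

theorem deriv_uh (hn : n ≠ 0) : deriv (uh n) = fun x => x - sin (π * n * x) / (n * π) :=
  funext fun x => (hasDerivAt_uh hn x).deriv

theorem hasDerivAt_deriv_uh (hn : n ≠ 0) (x : ℝ) :
    HasDerivAt (deriv (uh n)) (1 - cos (π * n * x)) x := by
  have hn' : (n : ℝ) ≠ 0 := Nat.cast_ne_zero.2 hn
  have hsin : HasDerivAt (fun x => sin (π * n * x)) (cos (π * n * x) * (π * n)) x :=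
    (hasDerivAt_sin _).comp x (by simpa using (hasDerivAt_id x).const_mul (π * n))
  rw [deriv_uh hn]
  exact ((hasDerivAt_id x).sub (hsin.div_const (n * π))).congr_deriv (by field_simp)

theorem monotone_deriv_uh (hn : n ≠ 0) : Monotone (deriv (uh n)) :=
  monotone_of_deriv_nonneg (fun x => (hasDerivAt_deriv_uh hn x).differentiableAt)
    fun x => (hasDerivAt_deriv_uh hn x).deriv ▸ sub_nonneg.2 (cos_le_one _)

theorem deriv_uh_mem_Icc (hn : n ≠ 0) {x : ℝ} (hx : x ∈ Icc (0 : ℝ) 1) :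
    deriv (uh n) x ∈ Icc (0 : ℝ) 1 := by
  have h0 : deriv (uh n) 0 = 0 := by simp [deriv_uh hn]
  have h1 : deriv (uh n) 1 = 1 := by
    simp [deriv_uh hn, mul_comm π, sin_nat_mul_pi]
  exact ⟨h0 ▸ monotone_deriv_uh hn hx.1, h1 ▸ monotone_deriv_uh hn hx.2⟩

theorem tendstoUniformly_deriv_uh :
    TendstoUniformly (fun n => deriv (uh n)) (deriv u) atTop := by
  refine tendstoUniformly_of_dist_le_of_tendsto_zero tendsto_inv_natCast_mul_pi ?_
  filter_upwards [eventually_ne_atTop 0] with n hn x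
  rw [deriv_u, deriv_uh hn, Real.dist_eq, sub_sub_cancel, abs_div,
    abs_of_pos (by positivity : (0 : ℝ) < n * π)]
  gcongr
  exact abs_sin_le_one _

theorem secondDiff_uh (hn : n ≠ 0) (x : ℝ) :
    secondDiff (uh n) (1 / n) x = 1 - 4 * cos (π * n * x) / π ^ 2 := by
  have hadd : π * n * (x + 1 / n) = π * n * x + π := by field_simp
  have hsub : π * n * (x - 1 / n) = π * n * x - π := by field_simp
  simp only [secondDiff, uh, hadd, hsub, cos_add_pi, cos_sub_pi]
  field_simp
  ring

theorem cos_pi_mul_two_pow_mul_dyadic {m : ℕ} (hm : 0 < m) (j i : ℕ) :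
    cos (π * (2 : ℝ) ^ (j + m) * (i / 2 ^ j)) = 1 := by
  obtain ⟨k, rfl⟩ : ∃ k, m = k + 1 := Nat.exists_eq_succ_of_ne_zero hm.ne'
  have harg : π * (2 : ℝ) ^ (j + (k + 1)) * (i / 2 ^ j) = (i * 2 ^ k : ℕ) * (2 * π) := by
    push_cast
    field_simp
    ring
  rw [harg, cos_nat_mul_two_pi]

theorem secondDiff_uh_dyadic {m : ℕ} (hm : 0 < m) (j i : ℕ) :
    secondDiff (uh (2 ^ (j + m))) (1 / (2 : ℝ) ^ (j + m)) (i / 2 ^ j) = 1 - 4 / π ^ 2 := by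
  have h := secondDiff_uh (n := 2 ^ (j + m)) (by positivity) (i / 2 ^ j)
  push_cast at h
  rw [h, cos_pi_mul_two_pow_mul_dyadic hm, mul_one]

end Stmt19

/-- For `u(x) = x²/2` and `u_h(x) = u(x) + cos(πnx)/(nπ)²` (`h = 1/n`):
`u_h ≥ 0` on `[0,1]` and `u_h → u` uniformly on `[0,1]`; the derivative
`u_h'(x) = x - sin(πnx)/(nπ)` lies in `[0,1]` on `[0,1]` and converges uniformly to
`u'`; the centered second difference with step `h = 1/n` equals `1 - 4cos(πnx)/π²`,
which is nonnegative; yet at a dyadic point `x = i/2^j` with `n = 2^(j+m)`, `m > 0`,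
it equals `1 - 4/π²`, whereas `u''(x) = 1` and `1 - 4/π² ≠ 1`. -/
theorem stmt_19 :
    (∀ n : ℕ, 0 < n → ∀ x ∈ Icc (0 : ℝ) 1, 0 ≤ uh n x) ∧
    TendstoUniformlyOn (fun n : ℕ => uh n) u atTop (Icc (0 : ℝ) 1) ∧
    (∀ n : ℕ, 0 < n → ∀ x : ℝ,
      deriv (uh n) x = x - Real.sin (π * n * x) / (n * π)) ∧
    (∀ n : ℕ, 0 < n → ∀ x ∈ Icc (0 : ℝ) 1,
      0 ≤ deriv (uh n) x ∧ deriv (uh n) x ≤ 1) ∧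
    TendstoUniformlyOn (fun n : ℕ => deriv (uh n)) (deriv u) atTop (Icc (0 : ℝ) 1) ∧
    (∀ n : ℕ, 0 < n → ∀ x : ℝ,
      secondDiff (uh n) (1 / n) x = 1 - 4 * Real.cos (π * n * x) / π ^ 2) ∧
    (∀ n : ℕ, 0 < n → ∀ x : ℝ, 0 ≤ 1 - 4 * Real.cos (π * n * x) / π ^ 2) ∧
    (∀ m j i : ℕ, 0 < m → i ≤ 2 ^ j →
      secondDiff (uh (2 ^ (j + m))) (1 / (2 : ℝ) ^ (j + m)) ((i : ℝ) / 2 ^ j)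
        = 1 - 4 / π ^ 2) ∧
    (∀ x : ℝ, deriv (deriv u) x = 1) ∧
    (1 - 4 / π ^ 2 ≠ 1) := by
  refine ⟨fun n hn x _ => (uh_pos hn.ne' x).le,
    tendstoUniformly_uh.tendstoUniformlyOn,
    fun n hn x => (hasDerivAt_uh hn.ne' x).deriv,
    fun n hn x hx => deriv_uh_mem_Icc hn.ne' hx,
    tendstoUniformly_deriv_uh.tendstoUniformlyOn,
    fun n hn => secondDiff_uh hn.ne',
    fun _ _ _ => one_sub_four_mul_cos_div_pi_sq_nonneg _,
    fun m j i hm _ => secondDiff_uh_dyadic hm j i,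
    fun x => by simp [deriv_u], ?_⟩
  have : 0 < 4 / π ^ 2 := by positivity
  linarith
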